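/- Let n≥1 and let G be a graph with n² vertices α₀,…,α_{n²−1}. Let 𝔄 be the structure of empty signature with domain A={0,…,n−1}, and let X be the team over variables (v₁,v₂,r₁,r₂,m,e) consisting of the assignments s_i^j for 0≤i≤n²−1 and 0≤j≤i, where: (s_i^j(v₁),s_i^j(v₂)) is the base-n representation of i (i.e., s_i^j(v₁)=⌊i/n⌋, s_i^j(v₂)=i mod n); (s_i^j(r₁),s_i^j(r₂)) is the base-n representation of j; s_i^j(m)=1 if i=j and 0 otherwise; and s_i^j(e)=1 if i=j or there is an edge between α_j and α_i (with i>j), and 0 otherwise. Then G is n-colorable if and only if 𝔄⊨_X ∃x (dep(x,r₁,r₂,e,m) ∧ dep(v₁,v₂,x)). -/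

import Mathlib

/-
The witness for `x` is a colouring: `x` must be a function of the vertex `(v₁, v₂)`, and on the
assignments of the row `j = (r₁, r₂)` the value of `m` must be a function of `x` and `e`. Among
those assignments, `e = 1` holds exactly for the diagonal one (`m = 1`) and for the neighbours
`i > j` of `α_j` (`m = 0`), so the dependence atom says precisely that no neighbour of `α_j` with
a larger index shares its colour.
-/

/-- The six team variables (v₁, v₂, r₁, r₂, m, e). -/
inductive V6 : Type where
  | v1 | v2 | r1 | r2 | m | e
deriving DecidableEq

open Fin.NatCast in
open scoped Classical in
/-- The assignment `s_i^j` (for `j ≤ i < n²`):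
`(v₁,v₂)` is the base-`n` representation of `i`, `(r₁,r₂)` that of `j`,
`m = 1` iff `i = j`, and `e = 1` iff `i = j` or there is an edge between
`α_j` and `α_i`. -/
noncomputable def row (n : ℕ) [NeZero n] (G : SimpleGraph (Fin (n ^ 2)))
    (i j : ℕ) (hi : i < n ^ 2) (hj : j ≤ i) : V6 → Fin n := fun v =>
  match v with
  | .v1 => (↑(i / n) : Fin n)
  | .v2 => (↑(i % n) : Fin n)
  | .r1 => (↑(j / n) : Fin n)
  | .r2 => (↑(j % n) : Fin n)
  | .m => if i = j then 1 else 0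
  | .e => if i = j ∨ G.Adj ⟨j, lt_of_le_of_lt hj hi⟩ ⟨i, hi⟩ then 1 else 0

/-- The team `X = {s_i^j : 0 ≤ j ≤ i ≤ n² − 1}`. -/
def colTeam (n : ℕ) [NeZero n] (G : SimpleGraph (Fin (n ^ 2))) :
    Set (V6 → Fin n) :=
  {s | ∃ (i j : ℕ) (hi : i < n ^ 2) (hj : j ≤ i), s = row n G i j hi hj}

lemma ite_eq_ite_iff_of_ne {α : Type*} {a b : α} (hab : a ≠ b) {p q : Prop} [Decidable p]
    [Decidable q] : (if p then a else b) = (if q then a else b) ↔ (p ↔ q) := by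
  by_cases hp : p <;> by_cases hq : q <;> simp [hp, hq, hab, hab.symm]

lemma Fin.one_ne_zero_of_nontrivial {n : ℕ} [NeZero n] [Nontrivial (Fin n)] :
    (1 : Fin n) ≠ 0 := by
  simp [Fin.ext_iff, Nat.mod_eq_of_lt (Fin.nontrivial_iff_two_le.mp ‹_›)]

def digitsEquiv (n : ℕ) : Fin (n ^ 2) ≃ Fin n × Fin n :=
  (finCongr (sq n)).trans finProdFinEquiv.symm

open Fin.NatCast in
lemma digitsEquiv_apply (n : ℕ) [NeZero n] (i : Fin (n ^ 2)) :
    digitsEquiv n i = (((i / n : ℕ) : Fin n), ((i % n : ℕ) : Fin n)) := by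
  have hdiv : (i : ℕ) / n < n := Nat.div_lt_of_lt_mul (sq n ▸ i.isLt)
  ext
  · simp [digitsEquiv, Fin.val_cast_of_lt hdiv]
  · simp [digitsEquiv, Fin.val_cast_of_lt (Nat.mod_lt _ (NeZero.pos n))]

namespace row

variable {n : ℕ} [NeZero n] {G : SimpleGraph (Fin (n ^ 2))} {i j i' j' : ℕ} {hi : i < n ^ 2}
  {hj : j ≤ i} {hi' : i' < n ^ 2} {hj' : j' ≤ i'}

lemma mem_colTeam : row n G i j hi hj ∈ colTeam n G := ⟨i, j, hi, hj, rfl⟩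

lemma v1_v2_eq_digitsEquiv :
    (row n G i j hi hj .v1, row n G i j hi hj .v2) = digitsEquiv n ⟨i, hi⟩ :=
  (digitsEquiv_apply n ⟨i, hi⟩).symm

lemma r1_r2_eq_digitsEquiv :
    (row n G i j hi hj .r1, row n G i j hi hj .r2) = digitsEquiv n ⟨j, hj.trans_lt hi⟩ :=
  (digitsEquiv_apply n ⟨j, hj.trans_lt hi⟩).symm

lemma eq_of_r1_r2_eq (h1 : row n G i j hi hj .r1 = row n G i' j' hi' hj' .r1)
    (h2 : row n G i j hi hj .r2 = row n G i' j' hi' hj' .r2) : j = j' := by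
  have : digitsEquiv n ⟨j, hj.trans_lt hi⟩ = digitsEquiv n ⟨j', hj'.trans_lt hi'⟩ := by
    rw [← r1_r2_eq_digitsEquiv (G := G) (hi := hi) (hj := hj),
      ← r1_r2_eq_digitsEquiv (G := G) (hi := hi') (hj := hj'), h1, h2]
  exact Fin.val_eq_of_eq ((digitsEquiv n).injective this)

variable [Nontrivial (Fin n)]

lemma m_eq_iff : row n G i j hi hj .m = row n G i' j' hi' hj' .m ↔ (i = j ↔ i' = j') :=
  ite_eq_ite_iff_of_ne Fin.one_ne_zero_of_nontrivial

open scoped Classical in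
lemma e_eq_iff : row n G i j hi hj .e = row n G i' j' hi' hj' .e ↔
    (i = j ∨ G.Adj ⟨j, hj.trans_lt hi⟩ ⟨i, hi⟩ ↔
      i' = j' ∨ G.Adj ⟨j', hj'.trans_lt hi'⟩ ⟨i', hi'⟩) :=
  ite_eq_ite_iff_of_ne Fin.one_ne_zero_of_nontrivial

end row

/-- `F` is a lax supplementing function for `x` under which the extended team satisfies
`dep(x, r₁, r₂, e, m) ∧ dep(v₁, v₂, x)`. -/
def IsFormulaWitness (n : ℕ) [NeZero n] (G : SimpleGraph (Fin (n ^ 2)))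
    (F : (V6 → Fin n) → Set (Fin n)) : Prop :=
  (∀ s ∈ colTeam n G, (F s).Nonempty) ∧
  (∀ s ∈ colTeam n G, ∀ a ∈ F s, ∀ s' ∈ colTeam n G, ∀ a' ∈ F s',
    a = a' → s V6.r1 = s' V6.r1 → s V6.r2 = s' V6.r2 → s V6.e = s' V6.e → s V6.m = s' V6.m) ∧
  (∀ s ∈ colTeam n G, ∀ a ∈ F s, ∀ s' ∈ colTeam n G, ∀ a' ∈ F s',
    s V6.v1 = s' V6.v1 → s V6.v2 = s' V6.v2 → a = a')

section

variable {n : ℕ} [NeZero n] {G : SimpleGraph (Fin (n ^ 2))}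

def colorSupplement (c : Fin (n ^ 2) → Fin n) (s : V6 → Fin n) : Set (Fin n) :=
  {c ((digitsEquiv n).symm (s .v1, s .v2))}

lemma colorSupplement_row (c : Fin (n ^ 2) → Fin n) {i j : ℕ} (hi : i < n ^ 2) (hj : j ≤ i) :
    colorSupplement c (row n G i j hi hj) = {c ⟨i, hi⟩} := by
  rw [colorSupplement, row.v1_v2_eq_digitsEquiv, Equiv.symm_apply_apply]

lemma isFormulaWitness_colorSupplement {c : Fin (n ^ 2) → Fin n}
    (hc : ∀ u v, G.Adj u v → c u ≠ c v) : IsFormulaWitness n G (colorSupplement c) := by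
  refine ⟨fun s _ => Set.singleton_nonempty _, ?_, ?_⟩
  · rintro _ ⟨i, j, hi, hj, rfl⟩ a ha _ ⟨i', j', hi', hj', rfl⟩ a' ha' rfl hr1 hr2 he
    rw [colorSupplement_row, Set.mem_singleton_iff] at ha ha'
    obtain rfl := row.eq_of_r1_r2_eq hr1 hr2
    rcases subsingleton_or_nontrivial (Fin n) with _ | _
    · exact Subsingleton.elim _ _
    rw [row.e_eq_iff] at he
    rw [row.m_eq_iff]
    constructor
    · rintro rfl
      exact (he.1 (.inl rfl)).resolve_right fun hadj => hc _ _ hadj (ha.symm.trans ha')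
    · rintro rfl
      exact (he.2 (.inl rfl)).resolve_right fun hadj => hc _ _ hadj (ha'.symm.trans ha)
  · rintro s _ a ha s' _ a' ha' h1 h2
    rw [ha, ha', h1, h2]

lemma exists_coloring_of_isFormulaWitness {F : (V6 → Fin n) → Set (Fin n)}
    (hF : IsFormulaWitness n G F) : ∃ c : Fin (n ^ 2) → Fin n, ∀ u v, G.Adj u v → c u ≠ c v := by
  obtain ⟨hne, hdep_m, hdep_x⟩ := hF
  let c (v : Fin (n ^ 2)) : Fin n := (hne _ (row.mem_colTeam (hi := v.isLt) (hj := le_rfl))).some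
  have hcF (v : Fin (n ^ 2)) : c v ∈ F (row n G v v v.isLt le_rfl) := Set.Nonempty.some_mem _
  have hF_row {i j : ℕ} (hi : i < n ^ 2) (hj : j ≤ i) :
      ∀ a ∈ F (row n G i j hi hj), a = c ⟨i, hi⟩ :=
    fun a ha => hdep_x _ row.mem_colTeam a ha _ row.mem_colTeam _ (hcF _) rfl rfl
  have hc_lt {u v : Fin (n ^ 2)} (huv : G.Adj u v) (hlt : u < v) : c u ≠ c v := by
    intro hc
    have : Nontrivial (Fin n) := Fin.nontrivial_iff_two_le.mpr
      ((Nat.one_lt_pow_iff two_ne_zero).1 (by have := v.isLt; omega))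
    -- `s_v^u` and `s_u^u` agree on `x, r₁, r₂, e` (both have `e = 1`) but not on `m`.
    obtain ⟨a, ha⟩ := hne _ (row.mem_colTeam (G := G) (hi := v.isLt) (hj := hlt.le))
    have hm := hdep_m _ row.mem_colTeam a ha _ row.mem_colTeam (c u) (hcF u)
      (by rw [hF_row _ _ a ha, hc]) rfl rfl (row.e_eq_iff.2 (by simp [huv]))
    exact hlt.ne' (Fin.ext ((row.m_eq_iff.1 hm).2 rfl))
  refine ⟨c, fun u v huv => ?_⟩
  rcases lt_or_gt_of_ne (G.ne_of_adj huv) with h | h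
  · exact hc_lt huv h
  · exact (hc_lt huv.symm h).symm

end

/-- `G` is `n`-colorable iff
`𝔄 ⊨_X ∃x (dep(x,r₁,r₂,e,m) ∧ dep(v₁,v₂,x))`, where the lax team semantics
of the existential quantifier (extending each assignment `s ∈ X` by a
nonempty set `F s` of values for `x`) and of the dependence atoms are spelled
out explicitly on the extended team of pairs `(s, a)` with `s ∈ X`,
`a ∈ F s`. -/
theorem n_colorable_iff_teamSat (n : ℕ) [NeZero n]
    (G : SimpleGraph (Fin (n ^ 2))) :
    (∃ c : Fin (n ^ 2) → Fin n, ∀ u v : Fin (n ^ 2), G.Adj u v → c u ≠ c v)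
      ↔ ∃ F : (V6 → Fin n) → Set (Fin n),
          (∀ s ∈ colTeam n G, (F s).Nonempty) ∧
          -- dep(x, r₁, r₂, e, m)
          (∀ s ∈ colTeam n G, ∀ a ∈ F s, ∀ s' ∈ colTeam n G, ∀ a' ∈ F s',
            a = a' → s V6.r1 = s' V6.r1 → s V6.r2 = s' V6.r2 →
            s V6.e = s' V6.e → s V6.m = s' V6.m) ∧
          -- dep(v₁, v₂, x)
          (∀ s ∈ colTeam n G, ∀ a ∈ F s, ∀ s' ∈ colTeam n G, ∀ a' ∈ F s',
            s V6.v1 = s' V6.v1 → s V6.v2 = s' V6.v2 → a = a') :=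
  ⟨fun ⟨_, hc⟩ => ⟨_, isFormulaWitness_colorSupplement hc⟩,
    fun ⟨_, hF⟩ => exists_coloring_of_isFormulaWitness hF⟩
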